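/- Let n ∈ ℕ, N = 2^n, G = F^{⊗n}, let H be an N×N matrix over 𝔽₂, and let 𝒜ᶜ ⊆ {0,…,N−1}. Suppose u ∈ 𝔽₂^N satisfies u·H = 0 and set x = u·G. Let ℓ ∈ {0,…,N−2} and let ū ∈ 𝔽₂^{ℓ+1} be any vector with ū_j = u_j for all j ≤ ℓ. Then ū·H_{0:ℓ, ℒ_{ℓ+1}} + x·Q^{(ℓ+1)} = 0 over 𝔽₂, where Q^{(ℓ+1)} = G_{*, ℓ+1:N−1}·H_{ℓ+1:N−1, ℒ_{ℓ+1}}. -/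

import Mathlib

open Matrix Finset

/-- The 2×2 polarization kernel `F = [[1,0],[1,1]]` over `𝔽₂`. -/
def polarF : Matrix (Fin 2) (Fin 2) (ZMod 2) := !![1, 0; 1, 1]

/-- The `n`-th Kronecker power `F^{⊗n}` of the polarization kernel, a `2^n × 2^n`
matrix over `𝔽₂`. -/
def kronPow : (n : ℕ) → Matrix (Fin (2 ^ n)) (Fin (2 ^ n)) (ZMod 2)
  | 0 => 1
  | n + 1 =>
      Matrix.reindex (finProdFinEquiv.trans (finCongr (by ring)))
        (finProdFinEquiv.trans (finCongr (by ring)))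
        (Matrix.kroneckerMap (· * ·) polarF (kronPow n))

/-!
Over `𝔽₂` the kernel `F` is an involution, hence so is `G = F^{⊗n}`, and `x·G = u·G·G = u`.
Therefore `x·Q^{(ℓ+1)}` is the tail `Σ_{k ≥ ℓ+1} u_k H_{k,j}` of `(u·H)_j`, while the first sum
is its head because `ū` agrees with `u` there; together they give `(u·H)_j = 0`.
-/

lemma polarF_mul_self : polarF * polarF = 1 := by
  decide

lemma kronPow_mul_self (n : ℕ) : kronPow n * kronPow n = 1 := by
  induction n with
  | zero => simp [kronPow]
  | succ n ih =>
    show (kroneckerMap (· * ·) polarF (kronPow n)).submatrix _ _ *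
        (kroneckerMap (· * ·) polarF (kronPow n)).submatrix _ _ = 1
    rw [submatrix_mul_equiv, ← mul_kronecker_mul, polarF_mul_self, ih, one_kronecker_one]
    exact submatrix_one_equiv _

lemma vecMul_vecMul_kronPow (n : ℕ) (u : Fin (2 ^ n) → ZMod 2) :
    vecMul (vecMul u (kronPow n)) (kronPow n) = u := by
  rw [vecMul_vecMul, kronPow_mul_self, vecMul_one]

lemma sum_mul_sum_mul_eq_sum_vecMul_mul {R ι κ : Type*} [CommSemiring R] [Fintype ι]
    (x : ι → R) (G : Matrix ι κ R) (s : Finset κ) (h : κ → R) :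
    ∑ i, x i * ∑ k ∈ s, G i k * h k = ∑ k ∈ s, vecMul x G k * h k := by
  simp_rw [mul_sum, vecMul, dotProduct, sum_mul, mul_assoc]
  exact sum_comm

lemma sum_le_add_sum_lt_eq_vecMul {R ι : Type*} [CommSemiring R] {N : ℕ}
    (u : Fin N → R) (H : Matrix (Fin N) ι R) (ℓ : ℕ) (j : ι) :
    ∑ k ∈ univ.filter (fun k : Fin N => (k : ℕ) ≤ ℓ), u k * H k j
      + ∑ k ∈ univ.filter (fun k : Fin N => ℓ + 1 ≤ (k : ℕ)), u k * H k j = vecMul u H j := by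
  have hcompl : univ.filter (fun k : Fin N => ℓ + 1 ≤ (k : ℕ))
      = univ.filter (fun k : Fin N => ¬ (k : ℕ) ≤ ℓ) :=
    filter_congr fun k _ => by omega
  rw [hcompl, sum_filter_add_sum_filter_not]
  rfl

theorem scc_FC_conversion_general (n : ℕ) (H : Matrix (Fin (2 ^ n)) (Fin (2 ^ n)) (ZMod 2))
    (Ac : Finset (Fin (2 ^ n)))
    (u : Fin (2 ^ n) → ZMod 2) (hu : Matrix.vecMul u H = 0)
    (x : Fin (2 ^ n) → ZMod 2) (hx : x = Matrix.vecMul u (kronPow n))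
    (ℓ : ℕ)
    (ubar : Fin (2 ^ n) → ZMod 2)
    (hubar : ∀ j : Fin (2 ^ n), (j : ℕ) ≤ ℓ → ubar j = u j) :
    ∀ j ∈ Ac, ℓ + 1 ≤ (j : ℕ) →
      (∑ k ∈ Finset.univ.filter (fun k : Fin (2 ^ n) => (k : ℕ) ≤ ℓ), ubar k * H k j)
        + (∑ m : Fin (2 ^ n), x m *
            ∑ k ∈ Finset.univ.filter (fun k : Fin (2 ^ n) => ℓ + 1 ≤ (k : ℕ)),
              kronPow n m k * H k j) = 0 := by
  intro j _ _
  have hhead : ∑ k ∈ univ.filter (fun k : Fin (2 ^ n) => (k : ℕ) ≤ ℓ), ubar k * H k j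
      = ∑ k ∈ univ.filter (fun k : Fin (2 ^ n) => (k : ℕ) ≤ ℓ), u k * H k j :=
    sum_congr rfl fun k hk => by rw [hubar k (mem_filter.1 hk).2]
  rw [hhead, sum_mul_sum_mul_eq_sum_vecMul_mul, hx, vecMul_vecMul_kronPow,
    sum_le_add_sum_lt_eq_vecMul, hu, Pi.zero_apply]

/-- **Corollary 1 (FC conversion for SCC decoding).**  Let `N = 2^n`, `G = F^{⊗n}`,
`H` an `N × N` matrix over `𝔽₂`, and `Ac ⊆ {0,…,N−1}` the constrained positions.
Suppose `u·H = 0` and `x = u·G`.  Let `ℓ ∈ {0,…,N−2}` and let `ū` (a hypothesis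
vector of length `ℓ+1`) agree with `u` on all positions `j ≤ ℓ`.  Then for every
future constraint index `j ∈ ℒ_{ℓ+1} = {k ∈ Ac : k ≥ ℓ+1}`,
`(ū·H_{0:ℓ,ℒ_{ℓ+1}})_j + (x·Q^{(ℓ+1)})_j = 0`, where
`Q^{(ℓ+1)} = G_{*,ℓ+1:N−1}·H_{ℓ+1:N−1,ℒ_{ℓ+1}}`; entrywise,
`Σ_{k≤ℓ} ū_k·H_{k,j} + Σ_m x_m · (Σ_{k≥ℓ+1} G_{m,k}·H_{k,j}) = 0`. -/
theorem scc_FC_conversion (n : ℕ) (H : Matrix (Fin (2 ^ n)) (Fin (2 ^ n)) (ZMod 2))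
    (Ac : Finset (Fin (2 ^ n)))
    (u : Fin (2 ^ n) → ZMod 2) (hu : Matrix.vecMul u H = 0)
    (x : Fin (2 ^ n) → ZMod 2) (hx : x = Matrix.vecMul u (kronPow n))
    (ℓ : ℕ) (hℓ : ℓ + 1 < 2 ^ n)
    (ubar : Fin (2 ^ n) → ZMod 2)
    (hubar : ∀ j : Fin (2 ^ n), (j : ℕ) ≤ ℓ → ubar j = u j) :
    ∀ j ∈ Ac, ℓ + 1 ≤ (j : ℕ) →
      (∑ k ∈ Finset.univ.filter (fun k : Fin (2 ^ n) => (k : ℕ) ≤ ℓ), ubar k * H k j)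
        + (∑ m : Fin (2 ^ n), x m *
            ∑ k ∈ Finset.univ.filter (fun k : Fin (2 ^ n) => ℓ + 1 ≤ (k : ℕ)),
              kronPow n m k * H k j) = 0 :=
  scc_FC_conversion_general n H Ac u hu x hx ℓ ubar hubar
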